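/- arXiv:1911.10639 — 8 statements merged into one kernel-verified Lean document; each statement's English description precedes it below -/
import Mathlib

section
/- Every u ∈ ℤ^n can be written uniquely in the form u = ν_0·U + Σ_{j=1}^n ν_j·e_j where U = (-1,...,-1), e_j are the standard basis vectors, all ν_i are nonnegative integers, and at least one ν_i is zero; moreover in this representation w(u) = Σ_{j=0}^n ν_j. -/
/-- `m(u) = max {0, -u_1, ..., -u_n}` as an integer. -/
def mneg {n : ℕ} (u : Fin n → ℤ) : ℤ :=
  ((Finset.univ.sup fun i => (-u i).toNat : ℕ) : ℤ)

/-- The polyhedral weight `w(u) = Σ u_i + (n+1)·m(u)`. -/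
def wgt {n : ℕ} (u : Fin n → ℤ) : ℤ :=
  (∑ i, u i) + (n + 1) * mneg u

lemma mneg_nonneg {n : ℕ} (u : Fin n → ℤ) : 0 ≤ mneg u := Int.natCast_nonneg _

lemma neg_le_mneg {n : ℕ} (u : Fin n → ℤ) (j : Fin n) : -u j ≤ mneg u := by
  calc -u j ≤ ((-u j).toNat : ℤ) := Int.self_le_toNat _
    _ ≤ mneg u := by
        exact_mod_cast Nat.cast_le.mpr (Finset.le_sup (f := fun i => (-u i).toNat)
          (Finset.mem_univ j))

lemma mneg_le {n : ℕ} (u : Fin n → ℤ) (c : ℤ) (h0 : 0 ≤ c) (h : ∀ j, -u j ≤ c) :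
    mneg u ≤ c := by
  have : (Finset.univ.sup fun i => (-u i).toNat) ≤ c.toNat := by
    apply Finset.sup_le
    intro i _
    exact Int.toNat_le_toNat (h i)
  calc mneg u ≤ (c.toNat : ℤ) := by unfold mneg; exact_mod_cast this
    _ = c := Int.toNat_of_nonneg h0

/-- Every `u ∈ ℤⁿ` has a unique representation `u = ν₀·U + Σⱼ νⱼ eⱼ` with
`U = (-1,…,-1)`, all `νᵢ ≥ 0` and some `νᵢ = 0`; moreover `w(u) = Σ νᵢ`.
Coordinatewise the representation says `u j = ν (j+1) - ν 0`. -/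
theorem conical_representation (n : ℕ) (hn : 1 ≤ n) (u : Fin n → ℤ) :
    ∃! ν : Fin (n + 1) → ℕ,
      ((∃ i, ν i = 0) ∧ (∀ j : Fin n, u j = (ν j.succ : ℤ) - (ν 0 : ℤ))) ∧
        wgt u = ∑ i, (ν i : ℤ) := by
  set m := mneg u with hm
  have hm0 : 0 ≤ m := mneg_nonneg u
  have hle : ∀ j, 0 ≤ u j + m := fun j => by have := neg_le_mneg u j; linarith
  refine ⟨fun i => Fin.cases m.toNat (fun j => (u j + m).toNat) i, ⟨⟨?_, ?_⟩, ?_⟩, ?_⟩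
  · -- some coordinate is zero
    rcases eq_or_lt_of_le hm0 with h | h
    · exact ⟨0, by simp [← h]⟩
    · have hne : (Finset.univ : Finset (Fin n)).Nonempty := by
        exact Finset.univ_nonempty_iff.mpr ⟨⟨0, hn⟩⟩
      obtain ⟨i, _, hi⟩ := Finset.exists_mem_eq_sup Finset.univ hne
        (fun i => (-u i).toNat)
      have hmi : m = ((-u i).toNat : ℤ) := by rw [hm, mneg, hi]
      have hpos : 0 < ((-u i).toNat : ℤ) := hmi ▸ h
      have : 0 < -u i := by
        by_contra hc
        push_neg at hc
        simp [Int.toNat_of_nonpos (by linarith : -u i ≤ 0)] at hpos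
      have heq : ((-u i).toNat : ℤ) = -u i := Int.toNat_of_nonneg (le_of_lt this)
      refine ⟨i.succ, ?_⟩
      simp only [Fin.cases_succ]
      have : u i + m = 0 := by rw [hmi, heq]; ring
      simp [this]
  · intro j
    simp only [Fin.cases_succ, Fin.cases_zero]
    rw [Int.toNat_of_nonneg (hle j), Int.toNat_of_nonneg hm0]
    ring
  · rw [Fin.sum_univ_succ]
    simp only [Fin.cases_succ, Fin.cases_zero]
    rw [Int.toNat_of_nonneg hm0]
    have : ∀ j : Fin n, (((u j + m).toNat : ℤ)) = u j + m := fun j =>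
      Int.toNat_of_nonneg (hle j)
    rw [Finset.sum_congr rfl (fun j _ => this j), Finset.sum_add_distrib,
      Finset.sum_const, Finset.card_univ, Fintype.card_fin]
    simp only [wgt, nsmul_eq_mul, ← hm]
    ring
  · -- uniqueness
    rintro μ ⟨⟨⟨i0, hi0⟩, hcoord⟩, -⟩
    have hμ0 : (μ 0 : ℤ) = m := by
      have h1 : m ≤ (μ 0 : ℤ) := by
        apply mneg_le u _ (Int.natCast_nonneg _)
        intro j
        have := hcoord j
        have : -u j = (μ 0 : ℤ) - (μ j.succ : ℤ) := by linarith
        have h2 : (0:ℤ) ≤ (μ j.succ : ℤ) := Int.natCast_nonneg _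
        linarith
      have h2 : (μ 0 : ℤ) ≤ m := by
        rcases Fin.eq_zero_or_eq_succ i0 with h | ⟨j, rfl⟩
        · subst h; simp [hi0]; exact hm0
        · have := hcoord j
          rw [hi0] at this
          have hm' := neg_le_mneg u j
          simp at this
          rw [← hm] at hm'
          linarith
      linarith
    funext i
    induction i using Fin.cases with
    | zero =>
      simp only [Fin.cases_zero]
      have : μ 0 = m.toNat := by
        have := congrArg Int.toNat hμ0
        simpa using this
      exact this
    | succ j =>
      simp only [Fin.cases_succ]
      have := hcoord j
      have hμj : (μ j.succ : ℤ) = u j + m := by rw [← hμ0]; linarith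
      have := congrArg Int.toNat hμj
      simpa using this
end

section
/- Let γ be a root of the series Σ_{j≥0} t^{p^j}/p^j with p-adic valuation ord(γ) = 1/(p−1), and for i ≥ 1 set γ_i = Σ_{j=0}^i γ^{p^j}/p^j. Then γ_i = −Σ_{j=i+1}^∞ γ^{p^j}/p^j and ord(γ_i/γ) = (p^{i+1}−1)/(p−1) − (i+1) for every i ≥ 0. -/
/-- with `γseq i = Σ_{j=0}^i γ^(p^j)/p^j` (partial sums of the defining
series of `γ`), the tail partial sums `Σ_{j=i+1}^m γ^(p^j)/p^j` converge, in the
additive valuation `ord`, to `-γseq i`; and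
`ord (γseq i / γ) = (p^(i+1)-1)/(p-1) - (i+1)` for every `i ≥ 0`. -/
theorem gamma_i_tail_and_ord (p : ℕ) (hp : p.Prime) {K : Type} [Field K] [CharZero K]
    (ord : K → WithTop ℝ)
    (hord_top : ∀ x : K, ord x = ⊤ ↔ x = 0)
    (hord_mul : ∀ x y : K, ord (x * y) = ord x + ord y)
    (hord_add : ∀ x y : K, min (ord x) (ord y) ≤ ord (x + y))
    (hord_neg : ∀ x : K, ord (-x) = ord x)
    (hord_p : ord (p : K) = ((1 : ℝ) : WithTop ℝ))
    (γ : K)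
    (hγ : ord γ = ((((p : ℝ) - 1)⁻¹ : ℝ) : WithTop ℝ))
    (hroot : ∀ M : ℝ, ∃ N : ℕ, ∀ m ≥ N,
      (M : WithTop ℝ) ≤ ord (∑ j ∈ Finset.range (m + 1), γ ^ p ^ j / (p : K) ^ j))
    (γseq : ℕ → K)
    (hγseq : ∀ i : ℕ, γseq i = ∑ j ∈ Finset.range (i + 1), γ ^ p ^ j / (p : K) ^ j) :
    (∀ i : ℕ, ∀ M : ℝ, ∃ N : ℕ, ∀ m ≥ N, i + 1 ≤ m →
      (M : WithTop ℝ) ≤ ord (γseq i + ∑ j ∈ Finset.Icc (i + 1) m, γ ^ p ^ j / (p : K) ^ j)) ∧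
    (∀ i : ℕ, ord (γseq i / γ) =
      (((((p : ℝ) ^ (i + 1) - 1) / ((p : ℝ) - 1) - (i + 1)) : ℝ) : WithTop ℝ)) := by
  have hp2 : (2:ℝ) ≤ (p:ℝ) := by exact_mod_cast hp.two_le
  have hpm1 : (p:ℝ) - 1 ≠ 0 := by linarith
  have hne_top : ∀ x : K, x ≠ 0 → ord x ≠ ⊤ := fun x hx h => hx ((hord_top x).1 h)
  have hord_zero : ord (0:K) = ⊤ := (hord_top 0).2 rfl
  have h1 : ord (1:K) = 0 := by
    have h := hord_mul 1 1
    rw [one_mul] at h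
    have hne := hne_top 1 one_ne_zero
    lift ord (1:K) to ℝ using hne with a
    have ha : a = a + a := by exact_mod_cast h
    have : a = 0 := by linarith
    exact_mod_cast this
  have hinv : ∀ (x : K) (b : ℝ), ord x = (b : WithTop ℝ) → ord x⁻¹ = ((-b : ℝ) : WithTop ℝ) := by
    intro x b hb
    have hx : x ≠ 0 := by
      intro h
      rw [h, hord_zero] at hb
      exact WithTop.coe_ne_top hb.symm
    have h := hord_mul x x⁻¹
    rw [mul_inv_cancel₀ hx, h1, hb] at h
    have hne : ord x⁻¹ ≠ ⊤ := hne_top _ (inv_ne_zero hx)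
    lift ord x⁻¹ to ℝ using hne with c
    have hc : (0:ℝ) = b + c := by exact_mod_cast h
    have : c = -b := by linarith
    exact_mod_cast this
  have hpow : ∀ (x : K) (r : ℝ), ord x = (r : WithTop ℝ) →
      ∀ n : ℕ, ord (x ^ n) = (((n : ℝ) * r : ℝ) : WithTop ℝ) := by
    intro x r hr n
    induction n with
    | zero => simpa using h1
    | succ n ih =>
      rw [pow_succ, hord_mul, ih, hr, ← WithTop.coe_add]
      congr 1
      push_cast
      ring
  have hp_ord : ∀ j : ℕ, ord ((p:K) ^ j) = ((j : ℝ) : WithTop ℝ) := by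
    intro j
    rw [hpow (p:K) 1 hord_p j]
    norm_num
  set f : ℕ → ℝ := fun j => (p:ℝ) ^ j * ((p:ℝ) - 1)⁻¹ - j with hf
  have hterm : ∀ j : ℕ, ord (γ ^ p ^ j / (p:K) ^ j) = ((f j : ℝ) : WithTop ℝ) := by
    intro j
    rw [div_eq_mul_inv, hord_mul, hpow γ _ hγ (p ^ j), hinv ((p:K) ^ j) (j:ℝ) (hp_ord j),
      ← WithTop.coe_add]
    congr 1
    simp only [hf]
    push_cast
    ring
  have hsum : ∀ (S : Finset ℕ) (g : ℕ → K) (c : WithTop ℝ),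
      (∀ j ∈ S, c ≤ ord (g j)) → c ≤ ord (∑ j ∈ S, g j) := by
    intro S g c
    induction S using Finset.induction_on with
    | empty => intro _; simp [hord_zero]
    | @insert a s hx ih =>
      intro h
      rw [Finset.sum_insert hx]
      refine le_trans ?_ (hord_add _ _)
      exact le_min (h _ (Finset.mem_insert_self _ _))
        (ih fun j hj => h j (Finset.mem_insert_of_mem hj))
  have hmin : ∀ x y : K, ord x < ord y → ord (x + y) = ord x := by
    intro x y hxy
    refine le_antisymm ?_ ?_
    · by_contra hlt
      push_neg at hlt
      have he : x + y + -y = x := by ring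
      have h3 := hord_add (x + y) (-y)
      rw [he, hord_neg] at h3
      have : ord x < min (ord (x + y)) (ord y) := lt_min hlt hxy
      exact absurd h3 (not_le.mpr this)
    · exact le_trans (le_min le_rfl hxy.le) (hord_add x y)
  have part1 : ∀ i : ℕ, ∀ M : ℝ, ∃ N : ℕ, ∀ m ≥ N, i + 1 ≤ m →
      (M : WithTop ℝ) ≤ ord (γseq i + ∑ j ∈ Finset.Icc (i + 1) m, γ ^ p ^ j / (p : K) ^ j) := by
    intro i M
    obtain ⟨N, hN⟩ := hroot M
    refine ⟨N, fun m hm him => ?_⟩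
    have hsplit : γseq i + ∑ j ∈ Finset.Icc (i+1) m, γ ^ p ^ j / (p:K) ^ j
        = ∑ j ∈ Finset.range (m+1), γ ^ p ^ j / (p:K) ^ j := by
      rw [hγseq, ← Finset.Ico_add_one_right_eq_Icc, Finset.range_eq_Ico, Finset.range_eq_Ico]
      exact Finset.sum_Ico_consecutive (fun j => γ ^ p ^ j / (p:K) ^ j) (Nat.zero_le _) (by omega)
    rw [hsplit]
    exact hN m hm
  have hstep : ∀ j : ℕ, 1 ≤ j → f j + 1 ≤ f (j+1) := by
    intro j hj
    have hpj : (2:ℝ) ≤ (p:ℝ) ^ j := by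
      calc (2:ℝ) ≤ (p:ℝ) := hp2
        _ = (p:ℝ) ^ 1 := (pow_one _).symm
        _ ≤ (p:ℝ) ^ j := pow_le_pow_right₀ (by linarith) hj
    have key : (p:ℝ) ^ j * (p:ℝ) * ((p:ℝ) - 1)⁻¹ - (p:ℝ) ^ j * ((p:ℝ) - 1)⁻¹ = (p:ℝ) ^ j := by
      field_simp
    simp only [hf, pow_succ]
    push_cast
    linarith
  have hmono : ∀ a : ℕ, 1 ≤ a → ∀ b : ℕ, a + 1 ≤ b → f a + 1 ≤ f b := by
    intro a ha b hb
    induction b, hb using Nat.le_induction with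
    | base => exact hstep a ha
    | succ b hb ih =>
      have := hstep b (by omega)
      linarith
  have htail : ∀ i m : ℕ, i + 1 ≤ m →
      ord (∑ j ∈ Finset.Icc (i+1) m, γ ^ p ^ j / (p:K) ^ j) = ((f (i+1) : ℝ) : WithTop ℝ) := by
    intro i m him
    rw [← Finset.Ioc_insert_left him, Finset.sum_insert (by simp)]
    rw [hmin _ _ ?_, hterm]
    rw [hterm]
    refine lt_of_lt_of_le ?_ (hsum _ _ ((f (i+1) + 1 : ℝ) : WithTop ℝ) ?_)
    · exact_mod_cast (by linarith : f (i+1) < f (i+1) + 1)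
    · intro j hj
      rw [hterm]
      exact_mod_cast hmono (i+1) (by omega) j (Finset.mem_Ioc.mp hj).1
  refine ⟨part1, ?_⟩
  intro i
  obtain ⟨N, hN⟩ := part1 i (f (i+1) + 1)
  set m := max N (i+1) with hm
  have hm1 : m ≥ N := le_max_left _ _
  have hm2 : i + 1 ≤ m := le_max_right _ _
  have hA := hN m hm1 hm2
  set T := ∑ j ∈ Finset.Icc (i+1) m, γ ^ p ^ j / (p:K) ^ j with hT
  have hTo : ord T = ((f (i+1) : ℝ) : WithTop ℝ) := htail i m hm2
  have hγi : ord (γseq i) = ((f (i+1) : ℝ) : WithTop ℝ) := by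
    have h1' : ord (-T) < ord (γseq i + T) := by
      rw [hord_neg, hTo]
      exact lt_of_lt_of_le (by exact_mod_cast (by linarith : f (i+1) < f (i+1) + 1)) hA
    have h2' := hmin (-T) (γseq i + T) h1'
    have heq : -T + (γseq i + T) = γseq i := by ring
    rw [heq, hord_neg, hTo] at h2'
    exact h2'
  rw [div_eq_mul_inv, hord_mul, hγi, hinv γ _ hγ, ← WithTop.coe_add]
  congr 1
  simp only [hf]
  push_cast
  field_simp
  ring
end

section
/- With γ_i as above, ord(p^i·γ_i) ≥ p^{i+1}/(p−1) − 1 > p^i/(p−1) for all i ≥ 1. -/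
/-- `ord (p^i * γseq i) ≥ p^(i+1)/(p-1) - 1 > p^i/(p-1)` for all `i ≥ 1`. -/
theorem ord_pi_gamma_i (p : ℕ) (hp : p.Prime) {K : Type} [Field K] [CharZero K]
    (ord : K → WithTop ℝ)
    (hord_top : ∀ x : K, ord x = ⊤ ↔ x = 0)
    (hord_mul : ∀ x y : K, ord (x * y) = ord x + ord y)
    (hord_add : ∀ x y : K, min (ord x) (ord y) ≤ ord (x + y))
    (hord_neg : ∀ x : K, ord (-x) = ord x)
    (hord_p : ord (p : K) = ((1 : ℝ) : WithTop ℝ))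
    (γ : K)
    (hγ : ord γ = ((((p : ℝ) - 1)⁻¹ : ℝ) : WithTop ℝ))
    (hroot : ∀ M : ℝ, ∃ N : ℕ, ∀ m ≥ N,
      (M : WithTop ℝ) ≤ ord (∑ j ∈ Finset.range (m + 1), γ ^ p ^ j / (p : K) ^ j))
    (γseq : ℕ → K)
    (hγseq : ∀ i : ℕ, γseq i = ∑ j ∈ Finset.range (i + 1), γ ^ p ^ j / (p : K) ^ j) :
    ∀ i : ℕ, 1 ≤ i →
      ((((p : ℝ) ^ (i + 1) / ((p : ℝ) - 1) - 1 : ℝ) : WithTop ℝ)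
          ≤ ord ((p : K) ^ i * γseq i)) ∧
        (p : ℝ) ^ i / ((p : ℝ) - 1) < (p : ℝ) ^ (i + 1) / ((p : ℝ) - 1) - 1 := by
  have hp1 : (1 : ℝ) < (p : ℝ) := by exact_mod_cast hp.one_lt
  have hp0 : (0 : ℝ) < (p : ℝ) - 1 := by linarith
  have hpne : ((p : ℝ) - 1) ≠ 0 := ne_of_gt hp0
  -- ord 1 = 0
  have hord1 : ord (1 : K) = (0 : ℝ) := by
    have h := hord_mul 1 1
    rw [one_mul] at h
    have hne : ord (1 : K) ≠ ⊤ := by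
      rw [Ne, hord_top]; exact one_ne_zero
    obtain ⟨a, ha⟩ := (WithTop.ne_top_iff_exists).mp hne
    rw [← ha] at h ⊢
    rw [← WithTop.coe_add, WithTop.coe_eq_coe] at h
    norm_cast
    linarith
  -- powers
  have hord_pow : ∀ (x : K) (c : ℝ), ord x = (c : WithTop ℝ) →
      ∀ n : ℕ, ord (x ^ n) = (((n : ℝ) * c : ℝ) : WithTop ℝ) := by
    intro x c hx n
    induction n with
    | zero => simpa using hord1
    | succ n ih =>
      rw [pow_succ, hord_mul, ih, hx, ← WithTop.coe_add, WithTop.coe_eq_coe]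
      push_cast; ring
  have hordp_pow : ∀ j : ℕ, ord ((p : K) ^ j) = ((j : ℝ) : WithTop ℝ) := by
    intro j
    have := hord_pow (p : K) 1 (by simpa using hord_p) j
    simpa using this
  have hpK : (p : K) ≠ 0 := Nat.cast_ne_zero.mpr hp.ne_zero
  have hord_inv : ∀ j : ℕ, ord (((p : K) ^ j)⁻¹) = ((-(j : ℝ) : ℝ) : WithTop ℝ) := by
    intro j
    have hne : ((p : K) ^ j) ≠ 0 := pow_ne_zero _ hpK
    have h := hord_mul ((p : K) ^ j) ((p : K) ^ j)⁻¹
    rw [mul_inv_cancel₀ hne, hord1, hordp_pow] at h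
    have hnt : ord (((p : K) ^ j)⁻¹) ≠ ⊤ := by
      intro ht
      rw [ht] at h
      simp at h
    obtain ⟨a, ha⟩ := (WithTop.ne_top_iff_exists).mp hnt
    rw [← ha] at h ⊢
    rw [← WithTop.coe_add, WithTop.coe_eq_coe] at h
    rw [WithTop.coe_eq_coe]
    linarith [h.symm]
  -- ord of each term
  set f : ℕ → K := fun j => γ ^ p ^ j / (p : K) ^ j with hf
  have hterm : ∀ j : ℕ, ord (f j) =
      (((p : ℝ) ^ j / ((p : ℝ) - 1) - (j : ℝ) : ℝ) : WithTop ℝ) := by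
    intro j
    have h1 := hord_pow γ ((p : ℝ) - 1)⁻¹ hγ (p ^ j)
    have : f j = γ ^ p ^ j * ((p : K) ^ j)⁻¹ := div_eq_mul_inv _ _
    rw [this, hord_mul, h1, hord_inv, ← WithTop.coe_add, WithTop.coe_eq_coe]
    push_cast
    field_simp
    ring
  -- sum lower bound
  have hsum_le : ∀ (C : WithTop ℝ) (g : ℕ → K) (s : Finset ℕ),
      (∀ j ∈ s, C ≤ ord (g j)) → C ≤ ord (∑ j ∈ s, g j) := by
    intro C g s
    induction s using Finset.cons_induction with
    | empty =>
      intro _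
      rw [Finset.sum_empty, (hord_top 0).mpr rfl]
      exact le_top
    | cons a s ha ih =>
      intro h
      rw [Finset.sum_cons]
      refine le_trans (le_min ?_ ?_) (hord_add _ _)
      · exact h a (Finset.mem_cons_self _ _)
      · exact ih fun j hj => h j (Finset.mem_cons_of_mem hj)
  -- monotonicity of j ↦ p^j/(p-1) - j
  have hmono : ∀ a j : ℕ, a ≤ j →
      (p : ℝ) ^ a / ((p : ℝ) - 1) - (a : ℝ) ≤ (p : ℝ) ^ j / ((p : ℝ) - 1) - (j : ℝ) := by
    intro a j haj
    induction j, haj using Nat.le_induction with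
    | base => exact le_refl _
    | succ j hj ih =>
      have hkey : (p : ℝ) ^ (j + 1) / ((p : ℝ) - 1)
          = (p : ℝ) ^ j + (p : ℝ) ^ j / ((p : ℝ) - 1) := by
        field_simp; ring
      have hpj : (1 : ℝ) ≤ (p : ℝ) ^ j := one_le_pow₀ (le_of_lt hp1)
      push_cast
      push_cast at ih
      rw [hkey]
      linarith
  intro i hi
  constructor
  · -- main bound
    obtain ⟨N, hN⟩ := hroot ((p : ℝ) ^ (i + 1) / ((p : ℝ) - 1))
    set m := max N (i + 1) with hm
    have hNm : N ≤ m := le_max_left _ _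
    have him : i + 1 ≤ m := le_max_right _ _
    have hsplit : γseq i + ∑ j ∈ Finset.Ico (i + 1) (m + 1), f j
        = ∑ j ∈ Finset.range (m + 1), f j := by
      rw [hγseq, Finset.range_eq_Ico, Finset.range_eq_Ico]
      exact Finset.sum_Ico_consecutive f (Nat.zero_le _) (show i + 1 ≤ m + 1 by omega)
    have hγi : γseq i = (∑ j ∈ Finset.range (m + 1), f j)
        + -(∑ j ∈ Finset.Ico (i + 1) (m + 1), f j) := by
      rw [← hsplit]; ring
    set C : WithTop ℝ :=
      (((p : ℝ) ^ (i + 1) / ((p : ℝ) - 1) - ((i : ℝ) + 1) : ℝ) : WithTop ℝ) with hC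
    have hS : C ≤ ord (∑ j ∈ Finset.range (m + 1), f j) := by
      refine le_trans ?_ (hN m hNm)
      rw [hC, WithTop.coe_le_coe]
      have : (0 : ℝ) ≤ (i : ℝ) + 1 := by positivity
      linarith
    have hT : C ≤ ord (-(∑ j ∈ Finset.Ico (i + 1) (m + 1), f j)) := by
      rw [hord_neg]
      refine hsum_le C f _ fun j hj => ?_
      rw [hterm j, hC, WithTop.coe_le_coe]
      have hj' := (Finset.mem_Ico.mp hj).1
      have := hmono (i + 1) j hj'
      push_cast at this ⊢
      linarith
    have hγord : C ≤ ord (γseq i) := by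
      rw [hγi]
      exact le_trans (le_min hS hT) (hord_add _ _)
    rw [hord_mul, hordp_pow]
    calc (((p : ℝ) ^ (i + 1) / ((p : ℝ) - 1) - 1 : ℝ) : WithTop ℝ)
        = ((i : ℝ) : WithTop ℝ) + C := by
          rw [hC, ← WithTop.coe_add, WithTop.coe_eq_coe]; ring
      _ ≤ ((i : ℝ) : WithTop ℝ) + ord (γseq i) := add_le_add_right hγord _
  · -- strict inequality of the real bounds
    have hkey : (p : ℝ) ^ (i + 1) / ((p : ℝ) - 1)
        = (p : ℝ) ^ i + (p : ℝ) ^ i / ((p : ℝ) - 1) := by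
      field_simp; ring
    have hpi : (1 : ℝ) < (p : ℝ) ^ i := one_lt_pow₀ hp1 (by omega)
    rw [hkey]
    linarith
end

section
/- With γ_i as above, ord(γ_i·p^i / γ^{p^i}) = p^i − 1 for all i ≥ 1. -/
theorem aux_strict {K : Type} [Field K] (ord : K → WithTop ℝ)
    (hord_add : ∀ x y : K, min (ord x) (ord y) ≤ ord (x + y))
    (hord_neg : ∀ x : K, ord (-x) = ord x)
    {x y : K} (h : ord y < ord x) : ord (x + y) = ord y := by
  have h1 : ord y ≤ ord (x + y) := by
    have h0 := hord_add x y
    rwa [min_eq_right h.le] at h0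
  have h2 : ord (x + y) ≤ ord y := by
    have h3 := hord_add (x + y) (-x)
    have he : (x + y) + (-x) = y := by ring
    rw [he, hord_neg] at h3
    rcases min_le_iff.mp h3 with h4 | h4
    · exact h4
    · exact absurd h4 (not_le.mpr h)
  exact le_antisymm h2 h1

theorem aux_sum {K : Type} [Field K] (ord : K → WithTop ℝ)
    (hord_add : ∀ x y : K, min (ord x) (ord y) ≤ ord (x + y))
    (hord_neg : ∀ x : K, ord (-x) = ord x)
    (u : ℕ → K) :
    ∀ n : ℕ, 1 ≤ n →
    (∀ k, 1 ≤ k → k < n → ord (u 0) < ord (u k)) →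
    ord (∑ k ∈ Finset.range n, u k) = ord (u 0) := by
  intro n
  induction n with
  | zero => omega
  | succ m ih =>
    intro _ hu
    rcases Nat.eq_zero_or_pos m with hm | hm
    · subst hm; simp
    · rw [Finset.sum_range_succ]
      have hih : ord (∑ k ∈ Finset.range m, u k) = ord (u 0) :=
        ih hm (fun k h1 h2 => hu k h1 (by omega))
      have hlt : ord (∑ k ∈ Finset.range m, u k) < ord (u m) := by
        rw [hih]; exact hu m hm (by omega)
      rw [add_comm, aux_strict ord hord_add hord_neg hlt, hih]

theorem aux_one {K : Type} [Field K] (ord : K → WithTop ℝ)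
    (hord_top : ∀ x : K, ord x = ⊤ ↔ x = 0)
    (hord_mul : ∀ x y : K, ord (x * y) = ord x + ord y) :
    ord (1 : K) = ((0 : ℝ) : WithTop ℝ) := by
  have hne : ord (1 : K) ≠ ⊤ := fun h => one_ne_zero ((hord_top 1).mp h)
  obtain ⟨r, hr⟩ := WithTop.ne_top_iff_exists.mp hne
  have h1 := hord_mul 1 1
  rw [mul_one, ← hr, ← WithTop.coe_add] at h1
  have : r = r + r := WithTop.coe_injective h1
  have : r = 0 := by linarith
  rw [← hr, this]

theorem aux_inv {K : Type} [Field K] (ord : K → WithTop ℝ)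
    (hord_top : ∀ x : K, ord x = ⊤ ↔ x = 0)
    (hord_mul : ∀ x y : K, ord (x * y) = ord x + ord y)
    {x : K} (hx : x ≠ 0) {a : ℝ} (ha : ord x = (a : WithTop ℝ)) :
    ord x⁻¹ = ((-a : ℝ) : WithTop ℝ) := by
  have hne : ord x⁻¹ ≠ ⊤ := fun h => (inv_ne_zero hx) ((hord_top _).mp h)
  obtain ⟨r, hr⟩ := WithTop.ne_top_iff_exists.mp hne
  have h1 := hord_mul x x⁻¹
  rw [mul_inv_cancel₀ hx, aux_one ord hord_top hord_mul, ha, ← hr, ← WithTop.coe_add] at h1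
  have : (0 : ℝ) = a + r := WithTop.coe_injective h1
  rw [← hr]
  norm_cast
  linarith

theorem aux_pow {K : Type} [Field K] (ord : K → WithTop ℝ)
    (hord_top : ∀ x : K, ord x = ⊤ ↔ x = 0)
    (hord_mul : ∀ x y : K, ord (x * y) = ord x + ord y)
    {x : K} {a : ℝ} (hx : ord x = (a : WithTop ℝ)) (n : ℕ) :
    ord (x ^ n) = ((n * a : ℝ) : WithTop ℝ) := by
  induction n with
  | zero => simpa using aux_one ord hord_top hord_mul
  | succ m ih =>
    rw [pow_succ, hord_mul, ih, hx, ← WithTop.coe_add]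
    norm_cast
    push_cast
    ring

/-- `ord (γseq i * p^i / γ^(p^i)) = p^i - 1` for all `i ≥ 1`. -/
theorem ord_gamma_i_pi_div (p : ℕ) (hp : p.Prime) {K : Type} [Field K] [CharZero K]
    (ord : K → WithTop ℝ)
    (hord_top : ∀ x : K, ord x = ⊤ ↔ x = 0)
    (hord_mul : ∀ x y : K, ord (x * y) = ord x + ord y)
    (hord_add : ∀ x y : K, min (ord x) (ord y) ≤ ord (x + y))
    (hord_neg : ∀ x : K, ord (-x) = ord x)
    (hord_p : ord (p : K) = ((1 : ℝ) : WithTop ℝ))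
    (γ : K)
    (hγ : ord γ = ((((p : ℝ) - 1)⁻¹ : ℝ) : WithTop ℝ))
    (hroot : ∀ M : ℝ, ∃ N : ℕ, ∀ m ≥ N,
      (M : WithTop ℝ) ≤ ord (∑ j ∈ Finset.range (m + 1), γ ^ p ^ j / (p : K) ^ j))
    (γseq : ℕ → K)
    (hγseq : ∀ i : ℕ, γseq i = ∑ j ∈ Finset.range (i + 1), γ ^ p ^ j / (p : K) ^ j) :
    ∀ i : ℕ, 1 ≤ i →
      ord (γseq i * (p : K) ^ i / γ ^ p ^ i) = ((((p : ℝ) ^ i - 1 : ℝ)) : WithTop ℝ) := by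
  set q : ℝ := (p : ℝ) with hq
  have hq2 : (2 : ℝ) ≤ q := by rw [hq]; exact_mod_cast hp.two_le
  have hq1 : q - 1 ≠ 0 := by linarith
  have hpK : (p : K) ≠ 0 := Nat.cast_ne_zero.mpr hp.pos.ne'
  have hγ0 : γ ≠ 0 := by
    intro h
    have := (hord_top γ).mpr h
    rw [hγ] at this
    exact (WithTop.coe_ne_top) this
  set t : ℕ → K := fun j => γ ^ p ^ j / (p : K) ^ j with ht
  set f : ℕ → ℝ := fun j => q ^ j * (q - 1)⁻¹ - j with hf
  have hordt : ∀ j, ord (t j) = ((f j : ℝ) : WithTop ℝ) := by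
    intro j
    have h1 : ord (γ ^ p ^ j) = (((p ^ j : ℕ) * (q - 1)⁻¹ : ℝ) : WithTop ℝ) :=
      aux_pow ord hord_top hord_mul hγ (p ^ j)
    have h2 : ord ((p : K) ^ j) = (((j : ℝ) * 1 : ℝ) : WithTop ℝ) :=
      aux_pow ord hord_top hord_mul hord_p j
    have h3 : ord (((p : K) ^ j)⁻¹) = ((-(((j : ℝ)) * 1) : ℝ) : WithTop ℝ) :=
      aux_inv ord hord_top hord_mul (pow_ne_zero j hpK) h2
    have : t j = γ ^ p ^ j * ((p : K) ^ j)⁻¹ := div_eq_mul_inv _ _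
    rw [this, hord_mul, h1, h3, ← WithTop.coe_add]
    congr 1
    simp only [hf]
    push_cast
    ring
  have hstep : ∀ j, 1 ≤ j → f j < f (j + 1) := by
    intro j hj
    have hqj : q ≤ q ^ j := le_self_pow₀ (by linarith) (by omega)
    have key : f (j + 1) - f j = q ^ j - 1 := by
      simp only [hf]
      field_simp
      push_cast
      ring
    have : (0 : ℝ) < q ^ j - 1 := by linarith
    linarith
  have hmono : ∀ a b, 1 ≤ a → a < b → f a < f b := by
    intro a b ha hab
    induction b with
    | zero => omega
    | succ c ihc =>
      rcases Nat.lt_succ_iff_lt_or_eq.mp hab with h | h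
      · exact (ihc h).trans (hstep c (by omega))
      · subst h; exact hstep a ha
  intro i hi
  obtain ⟨N, hN⟩ := hroot (f (i + 1) + 1)
  obtain ⟨m, hm1, hm2⟩ : ∃ m, N ≤ m ∧ i + 1 ≤ m :=
    ⟨max N (i + 1), le_max_left _ _, le_max_right _ _⟩
  set S : K := ∑ j ∈ Finset.range (m + 1), t j with hS
  have hSord : ((f (i + 1) + 1 : ℝ) : WithTop ℝ) ≤ ord S := hN m hm1
  set T : K := ∑ j ∈ Finset.Ico (i + 1) (m + 1), t j with hT
  have hTeq : T = ∑ k ∈ Finset.range (m - i), t (i + 1 + k) := by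
    have h9 : m + 1 - (i + 1) = m - i := by omega
    rw [hT, Finset.sum_Ico_eq_sum_range, h9]
  have hTord : ord T = ((f (i + 1) : ℝ) : WithTop ℝ) := by
    rw [hTeq]
    have := aux_sum ord hord_add hord_neg (fun k => t (i + 1 + k)) (m - i)
      (by omega)
      (by
        intro k h1 h2
        rw [hordt, hordt]
        norm_num
        exact_mod_cast WithTop.coe_lt_coe.mpr (hmono (i + 1) (i + 1 + k) (by omega) (by omega)))
    simpa [hordt] using this
  have hsplit : γseq i + T = S := by
    rw [hγseq i, hT, hS, Finset.range_eq_Ico]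
    rw [Finset.range_eq_Ico]
    exact Finset.sum_Ico_consecutive t (Nat.zero_le _) (by omega : i + 1 ≤ m + 1)
  have hgs : ord (γseq i) = ((f (i + 1) : ℝ) : WithTop ℝ) := by
    have heq : γseq i = S + (-T) := by rw [← hsplit]; ring
    have hlt : ord (-T) < ord S := by
      rw [hord_neg, hTord]
      calc ((f (i+1) : ℝ) : WithTop ℝ) < ((f (i+1) + 1 : ℝ) : WithTop ℝ) := by
            exact_mod_cast WithTop.coe_lt_coe.mpr (by linarith)
        _ ≤ ord S := hSord
    rw [heq, aux_strict ord hord_add hord_neg hlt, hord_neg, hTord]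
  have h2 : ord ((p : K) ^ i) = (((i : ℝ) * 1 : ℝ) : WithTop ℝ) :=
    aux_pow ord hord_top hord_mul hord_p i
  have h1 : ord (γ ^ p ^ i) = (((p ^ i : ℕ) * (q - 1)⁻¹ : ℝ) : WithTop ℝ) :=
    aux_pow ord hord_top hord_mul hγ (p ^ i)
  have h3 : ord ((γ ^ p ^ i)⁻¹) = ((-((p ^ i : ℕ) * (q - 1)⁻¹) : ℝ) : WithTop ℝ) :=
    aux_inv ord hord_top hord_mul (pow_ne_zero _ hγ0) h1
  rw [div_eq_mul_inv, hord_mul, hord_mul, hgs, h2, h3, ← WithTop.coe_add, ← WithTop.coe_add]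
  congr 1
  simp only [hf]
  push_cast
  field_simp
  ring
end

section
/- Let λ be a p-adic unit and define B(u) = Σ_{(m,ℓ)∈I(u)} b_{m_1}···b_{m_n}·b_ℓ·λ^ℓ, where I(u) = {(m_1,...,m_n,ℓ) ∈ ℤ_{≥0}^{n+1} : m_i − ℓ = u_i for all i} and ord(b_j) ≥ j/(p−1). Then ord(B(u)) ≥ w(u)/(p−1). -/
/-- The index set `I(u) = {(m_1,…,m_n,ℓ) ∈ ℤ_{≥0}^{n+1} : m_i - ℓ = u_i for all i}`. -/
def Iset (n : ℕ) (u : Fin n → ℤ) : Type :=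
  {ml : (Fin n → ℕ) × ℕ // ∀ i, (ml.1 i : ℤ) - (ml.2 : ℤ) = u i}

/-- The term `b_{m_1} ⋯ b_{m_n} · b_ℓ · λ^ℓ` of the series `B(u)`. -/
def klTerm {n : ℕ} {K : Type} [Field K] (b : ℕ → K) (lam : K)
    (ml : (Fin n → ℕ) × ℕ) : K :=
  (∏ i, b (ml.1 i)) * b ml.2 * lam ^ ml.2

/-- if `ord (b_j) ≥ j/(p-1)`, `λ` is a `p`-adic unit, and
`B(u) = Σ_{(m,ℓ) ∈ I(u)} b_{m_1}⋯b_{m_n} b_ℓ λ^ℓ` (a `p`-adically convergent sum,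
expressed by saying that the finite partial sums converge to `B(u)` in `ord`),
then `ord (B(u)) ≥ w(u)/(p-1)`. -/
theorem ord_B_ge (p n : ℕ) (hp : p.Prime) (hn : 1 ≤ n)
    {K : Type} [Field K] [CharZero K]
    (ord : K → WithTop ℝ)
    (hord_top : ∀ x : K, ord x = ⊤ ↔ x = 0)
    (hord_mul : ∀ x y : K, ord (x * y) = ord x + ord y)
    (hord_add : ∀ x y : K, min (ord x) (ord y) ≤ ord (x + y))
    (hord_neg : ∀ x : K, ord (-x) = ord x)
    (hord_p : ord (p : K) = ((1 : ℝ) : WithTop ℝ))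
    (b : ℕ → K)
    (hbord : ∀ j : ℕ, ((((j : ℝ) / ((p : ℝ) - 1)) : ℝ) : WithTop ℝ) ≤ ord (b j))
    (lam : K) (hlam : ord lam = ((0 : ℝ) : WithTop ℝ))
    (u : Fin n → ℤ) (Bu : K)
    (hconv : ∀ M : ℝ, ∃ s : Finset (Iset n u), ∀ t : Finset (Iset n u), s ⊆ t →
      (M : WithTop ℝ) ≤ ord (Bu - ∑ ml ∈ t, klTerm b lam ml.1)) :
    ((((wgt u : ℝ) / ((p : ℝ) - 1)) : ℝ) : WithTop ℝ) ≤ ord Bu := by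
  classical
  have hp1 : (0:ℝ) < (p:ℝ) - 1 := by
    have : (2:ℝ) ≤ (p:ℝ) := by exact_mod_cast hp.two_le
    linarith
  set W : ℝ := (wgt u : ℝ) / ((p:ℝ) - 1) with hWdef
  have hord0 : ord 0 = ⊤ := (hord_top 0).mpr rfl
  have hord1 : ord 1 = ((0:ℝ) : WithTop ℝ) := by
    have h := hord_mul 1 1
    rw [mul_one] at h
    have hne : ord (1 : K) ≠ ⊤ := fun h => one_ne_zero ((hord_top 1).mp h)
    lift ord (1 : K) to ℝ using hne with a ha
    have ha0 : a = a + a := by exact_mod_cast h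
    have ha0' : a = 0 := by linarith
    exact_mod_cast ha0'
  have hpow : ∀ k : ℕ, ord (lam ^ k) = ((0:ℝ) : WithTop ℝ) := by
    intro k
    induction k with
    | zero => simpa using hord1
    | succ k ih =>
      rw [pow_succ, hord_mul, ih, hlam, ← WithTop.coe_add, add_zero]
  -- bound on each term
  have hterm : ∀ x : Iset n u, ((W : ℝ) : WithTop ℝ) ≤ ord (klTerm b lam x.1) := by
    rintro ⟨⟨m, ℓ⟩, hx⟩
    have hprod : ∀ s : Finset (Fin n),
        (((∑ i ∈ s, (m i : ℝ)) / ((p:ℝ) - 1) : ℝ) : WithTop ℝ) ≤ ord (∏ i ∈ s, b (m i)) := by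
      intro s
      induction s using Finset.induction with
      | empty => simp [hord1]
      | insert _ _ h ih =>
        rw [Finset.prod_insert h, hord_mul, Finset.sum_insert h, add_div,
          WithTop.coe_add]
        exact add_le_add (hbord _) ih
    have hml : ∀ i, (m i : ℤ) = u i + ℓ := by
      intro i; have := hx i; simp at this ⊢; linarith
    have hl : mneg u ≤ (ℓ : ℤ) := by
      unfold mneg
      have : (Finset.univ.sup fun i => (-u i).toNat) ≤ ℓ := by
        apply Finset.sup_le
        intro i _
        rw [Int.toNat_le]
        have h1 : (0:ℤ) ≤ (m i : ℤ) := Int.natCast_nonneg _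
        have := hml i
        omega
      exact_mod_cast this
    have hsumZ : (wgt u : ℤ) ≤ (∑ i, (m i : ℤ)) + ℓ := by
      have hs : (∑ i, (m i : ℤ)) = (∑ i, u i) + n * ℓ := by
        rw [Finset.sum_congr rfl (fun i _ => hml i), Finset.sum_add_distrib,
          Finset.sum_const, Finset.card_univ, Fintype.card_fin, nsmul_eq_mul]
      have hmul : ((n:ℤ) + 1) * mneg u ≤ ((n:ℤ) + 1) * ℓ :=
        mul_le_mul_of_nonneg_left hl (by positivity)
      unfold wgt
      rw [hs]
      push_cast at hmul ⊢
      linarith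
    have hsumR : (wgt u : ℝ) ≤ (∑ i, (m i : ℝ)) + (ℓ : ℝ) := by
      exact_mod_cast hsumZ
    have key : (klTerm b lam (m, ℓ)) = (∏ i, b (m i)) * b ℓ * lam ^ ℓ := rfl
    rw [key, hord_mul, hord_mul, hpow ℓ]
    have h2 : ((((∑ i, (m i : ℝ)) + (ℓ:ℝ)) / ((p:ℝ) - 1) : ℝ) : WithTop ℝ) ≤
        ord (∏ i, b (m i)) + ord (b ℓ) + ((0:ℝ) : WithTop ℝ) := by
      have : ((((∑ i, (m i : ℝ)) + (ℓ:ℝ)) / ((p:ℝ) - 1) : ℝ) : WithTop ℝ)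
          = (((∑ i, (m i : ℝ)) / ((p:ℝ) - 1) : ℝ) : WithTop ℝ)
            + (((ℓ:ℝ) / ((p:ℝ) - 1) : ℝ) : WithTop ℝ) + ((0:ℝ) : WithTop ℝ) := by
        rw [← WithTop.coe_add, ← WithTop.coe_add, add_div, add_zero]
      rw [this]
      exact add_le_add (add_le_add (hprod Finset.univ) (hbord ℓ)) le_rfl
    refine le_trans ?_ h2
    rw [WithTop.coe_le_coe, hWdef]
    gcongr
  -- bound on partial sums
  have hsum : ∀ t : Finset (Iset n u),
      ((W : ℝ) : WithTop ℝ) ≤ ord (∑ ml ∈ t, klTerm b lam ml.1) := by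
    intro t
    induction t using Finset.induction with
    | empty => simp [hord0]
    | insert _ _ h ih =>
      rw [Finset.sum_insert h]
      exact le_trans (le_min (hterm _) ih) (hord_add _ _)
  obtain ⟨s, hs⟩ := hconv W
  have h1 := hs s (Finset.Subset.refl s)
  have h2 := hsum s
  have hBu : Bu = (Bu - ∑ ml ∈ s, klTerm b lam ml.1) + ∑ ml ∈ s, klTerm b lam ml.1 := by
    ring
  rw [hBu]
  exact le_trans (le_min h1 h2) (hord_add _ _)
end

section
/- Fix 0 ≤ i ≤ n and let ε_i = e_1 + ... + e_i. If u ∈ ℤ^n with w(u) ≤ i and m(u) > 0, then m(p·u − ε_i) ≥ p·m(u) + 1. -/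
/-- `ε_i = e_1 + ⋯ + e_i ∈ ℤⁿ` (so `ε_0 = 0`). -/
def epsvec (n i : ℕ) : Fin n → ℤ := fun j => if (j : ℕ) < i then 1 else 0

lemma sum_epsvec (n i : ℕ) (hi : i ≤ n) : (∑ j, epsvec n i j) = (i : ℤ) := by
  unfold epsvec
  rw [Fin.sum_univ_eq_sum_range (fun k => if k < i then (1:ℤ) else 0)]
  rw [← Finset.sum_filter]
  have h : Finset.filter (fun k => k < i) (Finset.range n) = Finset.range i := by
    ext k; simp; omega
  simp [h]

theorem mneg_pmul_sub_eps_of_mneg_pos (p n : ℕ) (hp : p.Prime) (hn : 1 ≤ n)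
    (i : ℕ) (hi : i ≤ n) (u : Fin n → ℤ)
    (hw : wgt u ≤ (i : ℤ)) (hm : 0 < mneg u) :
    (p : ℤ) * mneg u + 1 ≤ mneg (fun j => (p : ℤ) * u j - epsvec n i j) := by
  set m := mneg u with hmdef
  have key : ∃ j : Fin n, (j : ℕ) < i ∧ u j ≤ -m := by
    by_contra h
    push_neg at h
    have hsum : (∑ j, (-m + epsvec n i j)) ≤ ∑ j, u j := by
      apply Finset.sum_le_sum
      intro j _
      unfold epsvec
      by_cases hj : (j : ℕ) < i
      · have := h j hj
        simp [hj]; omega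
      · have := neg_le_mneg u j
        simp [hj]; omega
    rw [Finset.sum_add_distrib, sum_epsvec n i hi, Finset.sum_const] at hsum
    simp only [Finset.card_univ, Fintype.card_fin, smul_eq_mul] at hsum
    have hwgt : wgt u = (∑ j, u j) + (n + 1) * m := rfl
    rw [nsmul_eq_mul] at hsum
    have hnm : ((n:ℤ) + 1) * m = (n:ℤ) * m + m := by ring
    rw [hwgt] at hw
    linarith
  obtain ⟨j, hji, hjm⟩ := key
  have hle := neg_le_mneg (fun j => (p : ℤ) * u j - epsvec n i j) j
  have heps : epsvec n i j = 1 := by unfold epsvec; simp [hji]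
  simp only [heps] at hle
  have hp0 : (0 : ℤ) ≤ (p : ℤ) := by positivity
  nlinarith [mul_le_mul_of_nonneg_left hjm hp0]
end

section
/- Fix 0 ≤ i ≤ n and let λ be a p-adic unit. With b_j the coefficients of AH(γt), the diagonal coefficient B((p−1)·ε_i) = Σ_{ℓ≥0} b_{p−1+ℓ}^i · b_ℓ^{n+1−i} · λ^ℓ satisfies ord(B((p−1)ε_i)) = i, and moreover ord(Σ_{ℓ≥1} b_{p−1+ℓ}^i b_ℓ^{n+1−i} λ^ℓ) ≥ i + (n+1)/(p−1). -/
/-- fix `0 ≤ i ≤ n` and a `p`-adic unit `λ`.  With `b_j` the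
coefficients of `AH(γ t)` (so `b_j = γ^j/j!` for `0 ≤ j ≤ p-1` and
`ord (b_j) ≥ j/(p-1)` in general), the diagonal coefficient
`B((p-1)·ε_i) = Σ_{ℓ≥0} b_{p-1+ℓ}^i · b_ℓ^{n+1-i} · λ^ℓ` (a `p`-adically
convergent series, expressed via convergence of partial sums in `ord`)
satisfies `ord (B((p-1)ε_i)) = i`, and moreover
`ord (Σ_{ℓ≥1} b_{p-1+ℓ}^i b_ℓ^{n+1-i} λ^ℓ) ≥ i + (n+1)/(p-1)`. -/
theorem ord_B_diag (p n : ℕ) (hp : p.Prime) (hn : 1 ≤ n)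
    {K : Type} [Field K] [CharZero K]
    (ord : K → WithTop ℝ)
    (hord_top : ∀ x : K, ord x = ⊤ ↔ x = 0)
    (hord_mul : ∀ x y : K, ord (x * y) = ord x + ord y)
    (hord_add : ∀ x y : K, min (ord x) (ord y) ≤ ord (x + y))
    (hord_neg : ∀ x : K, ord (-x) = ord x)
    (hord_p : ord (p : K) = ((1 : ℝ) : WithTop ℝ))
    (hord_unit : ∀ m : ℕ, ¬ p ∣ m → m ≠ 0 → ord (m : K) = ((0 : ℝ) : WithTop ℝ))
    (γ : K)
    (hγ : ord γ = ((((p : ℝ) - 1)⁻¹ : ℝ) : WithTop ℝ))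
    (b : ℕ → K)
    (hblow : ∀ j : ℕ, j ≤ p - 1 → b j = γ ^ j / (j.factorial : K))
    (hbord : ∀ j : ℕ, ((((j : ℝ) / ((p : ℝ) - 1)) : ℝ) : WithTop ℝ) ≤ ord (b j))
    (lam : K) (hlam : ord lam = ((0 : ℝ) : WithTop ℝ))
    (i : ℕ) (hi : i ≤ n)
    (Bd : K)
    (hconv : ∀ M : ℝ, ∃ N : ℕ, ∀ m ≥ N,
      (M : WithTop ℝ) ≤
        ord (Bd - ∑ ℓ ∈ Finset.range m, (b (p - 1 + ℓ)) ^ i * (b ℓ) ^ (n + 1 - i) * lam ^ ℓ)) :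
    ord Bd = (((i : ℝ)) : WithTop ℝ) ∧
      ((((i : ℝ) + ((n : ℝ) + 1) / ((p : ℝ) - 1)) : ℝ) : WithTop ℝ) ≤
        ord (Bd - (b (p - 1)) ^ i * (b 0) ^ (n + 1 - i)) := by
  classical
  have h2p : 2 ≤ p := hp.two_le
  have hPpos : (0:ℝ) < (p:ℝ) - 1 := by
    have : (2:ℝ) ≤ (p:ℝ) := by exact_mod_cast h2p
    linarith
  have hord0 : ord 0 = ⊤ := (hord_top 0).mpr rfl
  have hord1 : ord 1 = ((0:ℝ) : WithTop ℝ) := by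
    have h := hord_mul 1 1
    rw [one_mul] at h
    have hne : ord (1:K) ≠ ⊤ := fun ht => one_ne_zero ((hord_top 1).mp ht)
    obtain ⟨r, hr⟩ := WithTop.ne_top_iff_exists.mp hne
    rw [← hr] at h ⊢
    have hr2 : r = r + r := by exact_mod_cast h
    have : r = 0 := by linarith
    simp [this]
  have hord_pow : ∀ (x : K) (r : ℝ), ord x = (r : WithTop ℝ) →
      ∀ k : ℕ, ord (x ^ k) = (((k : ℝ) * r : ℝ) : WithTop ℝ) := by
    intro x r hx k
    induction k with
    | zero => simpa using hord1
    | succ k ih =>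
        rw [pow_succ, hord_mul, ih, hx, ← WithTop.coe_add]
        congr 1
        push_cast
        ring
  have hord_pow_le : ∀ (x : K) (r : ℝ), (r : WithTop ℝ) ≤ ord x →
      ∀ k : ℕ, (((k : ℝ) * r : ℝ) : WithTop ℝ) ≤ ord (x ^ k) := by
    intro x r hx k
    induction k with
    | zero => simp [hord1]
    | succ k ih =>
        rw [pow_succ, hord_mul]
        have h1 : (((k:ℝ)*r + r : ℝ) : WithTop ℝ) ≤ ord (x^k) + ord x := by
          rw [WithTop.coe_add]; exact add_le_add ih hx
        refine le_trans (le_of_eq ?_) h1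
        congr 1
        push_cast
        ring
  have hord_inv : ∀ (x : K) (r : ℝ), ord x = (r : WithTop ℝ) →
      ord x⁻¹ = ((-r : ℝ) : WithTop ℝ) := by
    intro x r hx
    have hx0 : x ≠ 0 := by
      intro h; rw [h, hord0] at hx; exact WithTop.coe_ne_top hx.symm
    have h := hord_mul x x⁻¹
    rw [mul_inv_cancel₀ hx0, hord1, hx] at h
    have hne : ord x⁻¹ ≠ ⊤ := by
      intro ht; rw [ht] at h; simp at h
    obtain ⟨s, hs⟩ := WithTop.ne_top_iff_exists.mp hne
    rw [← hs] at h ⊢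
    have h2 : (0:ℝ) = r + s := by exact_mod_cast h
    norm_cast
    linarith
  have hb0 : b 0 = 1 := by
    have := hblow 0 (Nat.zero_le _)
    simpa using this
  have hordb0 : ord (b 0) = ((0:ℝ) : WithTop ℝ) := by rw [hb0, hord1]
  have hfacord : ord (((p-1).factorial : ℕ) : K) = ((0:ℝ) : WithTop ℝ) := by
    apply hord_unit
    · intro hdvd
      have := (Nat.Prime.dvd_factorial hp).mp hdvd
      omega
    · exact Nat.factorial_ne_zero _
  have hcast : ((p-1 : ℕ) : ℝ) = (p:ℝ) - 1 := by
    have : 1 ≤ p := by omega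
    push_cast [this]
    ring
  have hordbp1 : ord (b (p-1)) = ((1:ℝ) : WithTop ℝ) := by
    rw [hblow (p-1) le_rfl, div_eq_mul_inv, hord_mul, hord_pow γ _ hγ (p-1),
        hord_inv _ _ hfacord, hcast, mul_inv_cancel₀ (ne_of_gt hPpos)]
    norm_num
  have hord_head : ord ((b (p-1))^i * (b 0)^(n+1-i)) = ((i:ℝ) : WithTop ℝ) := by
    rw [hord_mul, hord_pow _ _ hordbp1 i, hord_pow _ _ hordb0 (n+1-i),
        ← WithTop.coe_add]
    norm_num
  set c : ℝ := (i:ℝ) + ((n:ℝ)+1)/((p:ℝ)-1) with hc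
  have hterm : ∀ ℓ : ℕ, 1 ≤ ℓ →
      ((c : ℝ) : WithTop ℝ) ≤ ord ((b (p-1+ℓ))^i * (b ℓ)^(n+1-i) * lam^ℓ) := by
    intro ℓ hℓ
    rw [hord_mul, hord_mul, hord_pow _ _ hlam ℓ]
    have h1 := hord_pow_le (b (p-1+ℓ)) _ (hbord (p-1+ℓ)) i
    have h2 := hord_pow_le (b ℓ) _ (hbord ℓ) (n+1-i)
    have hℓR : (1:ℝ) ≤ (ℓ:ℝ) := by exact_mod_cast hℓ
    have hni : ((n+1-i:ℕ):ℝ) = (n:ℝ)+1-(i:ℝ) := by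
      have : i ≤ n + 1 := by omega
      push_cast [this]
      ring
    have hpl : ((p-1+ℓ:ℕ):ℝ) = (p:ℝ)-1+(ℓ:ℝ) := by
      push_cast [hcast]
      ring
    have hsum : ((c:ℝ) : WithTop ℝ) ≤
        ((((i:ℕ):ℝ) * (((p-1+ℓ:ℕ):ℝ)/((p:ℝ)-1)) : ℝ) : WithTop ℝ) +
        ((((n+1-i:ℕ):ℝ) * (((ℓ:ℕ):ℝ)/((p:ℝ)-1)) : ℝ) : WithTop ℝ) +
        (((ℓ:ℝ)*0 : ℝ) : WithTop ℝ) := by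
      rw [← WithTop.coe_add, ← WithTop.coe_add, WithTop.coe_le_coe, hni, hpl]
      have hkey : (0:ℝ) ≤ (((n:ℝ)+1)*((ℓ:ℝ)-1))/((p:ℝ)-1) :=
        div_nonneg (mul_nonneg (by positivity) (by linarith)) (le_of_lt hPpos)
      have heq : (i:ℝ)*(((p:ℝ)-1+(ℓ:ℝ))/((p:ℝ)-1)) + ((n:ℝ)+1-(i:ℝ))*((ℓ:ℝ)/((p:ℝ)-1))
          + (ℓ:ℝ)*0 - ((i:ℝ) + ((n:ℝ)+1)/((p:ℝ)-1)) = (((n:ℝ)+1)*((ℓ:ℝ)-1))/((p:ℝ)-1) := by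
        field_simp
        ring
      rw [hc]
      linarith
    exact le_trans hsum (add_le_add (add_le_add h1 h2) le_rfl)
  have hord_sum : ∀ (s : Finset ℕ) (f : ℕ → K),
      (∀ ℓ ∈ s, ((c:ℝ):WithTop ℝ) ≤ ord (f ℓ)) →
      ((c:ℝ):WithTop ℝ) ≤ ord (∑ ℓ ∈ s, f ℓ) := by
    intro s
    induction s using Finset.induction_on with
    | empty => intro f _; simp [hord0]
    | insert _ _ hnotmem ih =>
        intro f hf
        rw [Finset.sum_insert hnotmem]
        refine le_trans (le_min (hf _ (Finset.mem_insert_self _ _))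
          (ih f fun ℓ hℓ => hf ℓ (Finset.mem_insert_of_mem hℓ))) (hord_add _ _)
  have hpartial : ∀ m : ℕ, ((c:ℝ):WithTop ℝ) ≤
      ord ((∑ ℓ ∈ Finset.range (m+1), (b (p-1+ℓ))^i * (b ℓ)^(n+1-i) * lam^ℓ)
        - (b (p-1))^i * (b 0)^(n+1-i)) := by
    intro m
    have hrw : (∑ ℓ ∈ Finset.range (m+1), (b (p-1+ℓ))^i * (b ℓ)^(n+1-i) * lam^ℓ)
        - (b (p-1))^i * (b 0)^(n+1-i)
        = ∑ ℓ ∈ Finset.range m, (b (p-1+(ℓ+1)))^i * (b (ℓ+1))^(n+1-i) * lam^(ℓ+1) := by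
      rw [Finset.sum_range_succ']
      simp
    rw [hrw]
    exact hord_sum _ _ (fun ℓ _ => hterm (ℓ+1) (by omega))
  obtain ⟨N, hN⟩ := hconv c
  have hm := hN (N+1) (by omega)
  have htail : ((c:ℝ):WithTop ℝ) ≤ ord (Bd - (b (p-1))^i * (b 0)^(n+1-i)) := by
    have hsplit : Bd - (b (p-1))^i * (b 0)^(n+1-i)
        = (Bd - ∑ ℓ ∈ Finset.range (N+1), (b (p-1+ℓ))^i * (b ℓ)^(n+1-i) * lam^ℓ)
          + ((∑ ℓ ∈ Finset.range (N+1), (b (p-1+ℓ))^i * (b ℓ)^(n+1-i) * lam^ℓ)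
            - (b (p-1))^i * (b 0)^(n+1-i)) := by ring
    rw [hsplit]
    exact le_trans (le_min hm (hpartial N)) (hord_add _ _)
  have hic : ((i:ℝ):WithTop ℝ) < ((c:ℝ):WithTop ℝ) := by
    rw [WithTop.coe_lt_coe, hc]
    have : (0:ℝ) < ((n:ℝ)+1)/((p:ℝ)-1) := div_pos (by positivity) hPpos
    linarith
  have hge : ((i:ℝ):WithTop ℝ) ≤ ord Bd := by
    have h := hord_add ((b (p-1))^i * (b 0)^(n+1-i))
      (Bd - (b (p-1))^i * (b 0)^(n+1-i))
    have heq : (b (p-1))^i * (b 0)^(n+1-i)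
        + (Bd - (b (p-1))^i * (b 0)^(n+1-i)) = Bd := by ring
    rw [heq] at h
    exact le_trans (le_min (le_of_eq hord_head.symm)
      (le_trans (le_of_lt hic) htail)) h
  have hle : ord Bd ≤ ((i:ℝ):WithTop ℝ) := by
    by_contra hlt
    push_neg at hlt
    have h := hord_add Bd (-(Bd - (b (p-1))^i * (b 0)^(n+1-i)))
    have heq : Bd + -(Bd - (b (p-1))^i * (b 0)^(n+1-i))
        = (b (p-1))^i * (b 0)^(n+1-i) := by ring
    rw [heq, hord_neg, hord_head] at h
    have hmin : ((i:ℝ):WithTop ℝ) < min (ord Bd)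
        (ord (Bd - (b (p-1))^i * (b 0)^(n+1-i))) :=
      lt_min hlt (lt_of_lt_of_le hic htail)
    exact absurd h (not_le.mpr hmin)
  exact ⟨le_antisymm hle hge, htail⟩
end

section
/- Let γ be a root of Σ_{j≥0} t^{p^j}/p^j with ord(γ) = 1/(p−1). Then γ^{p−1} ≡ −p modulo elements of valuation strictly greater than 1, i.e., ord(γ^{p−1} + p) > 1. -/
/-- `γ^(p-1) ≡ -p` modulo elements of valuation `> 1`,
i.e. `ord (γ^(p-1) + p) > 1`. -/
theorem gamma_pow_p_sub_one_cong (p : ℕ) (hp : p.Prime) {K : Type} [Field K] [CharZero K]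
    (ord : K → WithTop ℝ)
    (hord_top : ∀ x : K, ord x = ⊤ ↔ x = 0)
    (hord_mul : ∀ x y : K, ord (x * y) = ord x + ord y)
    (hord_add : ∀ x y : K, min (ord x) (ord y) ≤ ord (x + y))
    (hord_neg : ∀ x : K, ord (-x) = ord x)
    (hord_p : ord (p : K) = ((1 : ℝ) : WithTop ℝ))
    (γ : K)
    (hγ : ord γ = ((((p : ℝ) - 1)⁻¹ : ℝ) : WithTop ℝ))
    (hroot : ∀ M : ℝ, ∃ N : ℕ, ∀ m ≥ N,
      (M : WithTop ℝ) ≤ ord (∑ j ∈ Finset.range (m + 1), γ ^ p ^ j / (p : K) ^ j))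
    : ((1 : ℝ) : WithTop ℝ) < ord (γ ^ (p - 1) + (p : K)) := by
  set q : ℝ := (p : ℝ) with hq
  have hp2 : 2 ≤ p := hp.two_le
  have hq2 : (2 : ℝ) ≤ q := by rw [hq]; exact_mod_cast hp2
  have hq1 : (0 : ℝ) < q - 1 := by linarith
  have hpK : (p : K) ≠ 0 := Nat.cast_ne_zero.mpr hp.ne_zero
  have hγ0 : γ ≠ 0 := by
    intro h
    rw [(hord_top γ).mpr h] at hγ
    exact WithTop.top_ne_coe hγ
  -- ord 1 = 0
  have h1ne : ord (1 : K) ≠ ⊤ := by simp [hord_top]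
  have hone : ord (1 : K) = ((0 : ℝ) : WithTop ℝ) := by
    obtain ⟨r, hr⟩ := WithTop.ne_top_iff_exists.mp h1ne
    have h := hord_mul (1 : K) 1
    rw [one_mul, ← hr, ← WithTop.coe_add] at h
    have : r = r + r := WithTop.coe_injective h
    have h0 : r = 0 := by linarith
    rw [← hr, h0]
  -- ord of powers
  have hordpow : ∀ (x : K) (r : ℝ), ord x = (r : WithTop ℝ) → ∀ n : ℕ,
      ord (x ^ n) = (((n : ℝ) * r : ℝ) : WithTop ℝ) := by
    intro x r hx n
    induction n with
    | zero => simpa using hone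
    | succ n ih =>
        rw [pow_succ, hord_mul, ih, hx, ← WithTop.coe_add]
        congr 1
        push_cast
        ring
  -- ord of quotients
  have hdiv : ∀ (x y : K) (a b : ℝ), y ≠ 0 → ord x = (a : WithTop ℝ) →
      ord y = (b : WithTop ℝ) → ord (x / y) = ((a - b : ℝ) : WithTop ℝ) := by
    intro x y a b hy hx hyb
    have h := hord_mul (x / y) y
    rw [div_mul_cancel₀ _ hy, hx, hyb] at h
    rcases eq_or_ne (ord (x / y)) ⊤ with ht | ht
    · rw [ht, top_add] at h; exact absurd h (WithTop.coe_ne_top)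
    · obtain ⟨c, hc⟩ := WithTop.ne_top_iff_exists.mp ht
      rw [← hc, ← WithTop.coe_add] at h
      have hac : a = c + b := WithTop.coe_injective h
      rw [← hc]
      congr 1
      linarith
  -- lower bound for ord of sums
  have hsum : ∀ (s : Finset ℕ) (f : ℕ → K) (c : WithTop ℝ),
      (∀ i ∈ s, c ≤ ord (f i)) → c ≤ ord (∑ i ∈ s, f i) := by
    intro s f c
    induction s using Finset.cons_induction with
    | empty => intro _; simp [(hord_top 0).mpr rfl]
    | cons a s ha ih =>
        intro h
        rw [Finset.sum_cons]
        refine le_trans (le_min (h a (Finset.mem_cons_self a s)) (ih ?_)) (hord_add _ _)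
        exact fun i hi => h i (Finset.mem_cons_of_mem hi)
  -- real arithmetic: q^j ≥ 1 + j(q-1) + (q-1)^2 for j ≥ 2
  have hreal : ∀ j : ℕ, 2 ≤ j → 1 + (j : ℝ) * (q - 1) + (q - 1) ^ 2 ≤ q ^ j := by
    intro j hj
    induction j, hj using Nat.le_induction with
    | base => push_cast; nlinarith [hq2]
    | succ n hn ih =>
        have h1 : (1 : ℝ) ≤ q ^ n := one_le_pow₀ (by linarith)
        have h2 : (q - 1) ≤ (q - 1) * q ^ n := by nlinarith [h1, hq1]
        have h3 : q ^ (n + 1) = q ^ n + (q - 1) * q ^ n := by ring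
        push_cast
        linarith [ih, h2, h3]
  -- ord of the j-th term of the series, for j ≥ 2, is at least b
  set b : ℝ := (q - 1) + (q - 1)⁻¹ with hb
  have hterm : ∀ j : ℕ, 2 ≤ j → (b : WithTop ℝ) ≤ ord (γ ^ p ^ j / (p : K) ^ j) := by
    intro j hj
    have hnum : ord (γ ^ p ^ j) = (((p ^ j : ℝ) * (q - 1)⁻¹ : ℝ) : WithTop ℝ) := by
      have := hordpow γ ((q - 1)⁻¹) hγ (p ^ j)
      rw [this]
      push_cast
      ring_nf
    have hden : ord ((p : K) ^ j) = (((j : ℝ) * 1 : ℝ) : WithTop ℝ) :=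
      hordpow (p : K) 1 hord_p j
    have hdenne : ((p : K) ^ j) ≠ 0 := pow_ne_zero _ hpK
    rw [hdiv _ _ _ _ hdenne hnum hden]
    rw [WithTop.coe_le_coe]
    have hqj : ((p : ℝ)) ^ j = q ^ j := rfl
    have hr := hreal j hj
    have key : (b + (j : ℝ)) * (q - 1) ≤ q ^ j := by
      have hc : (q - 1)⁻¹ * (q - 1) = 1 := inv_mul_cancel₀ hq1.ne'
      rw [hb]
      nlinarith [hr, hc, hq1]
    have : b + (j : ℝ) ≤ q ^ j * (q - 1)⁻¹ := by
      rw [← le_div_iff₀ hq1] at key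
      rwa [div_eq_mul_inv] at key
    linarith
  -- use the root hypothesis
  obtain ⟨N, hN⟩ := hroot b
  set m := max N 1 with hm
  have hS := hN m (le_max_left _ _)
  have hm1 : 1 ≤ m := le_max_right _ _
  -- split the sum
  set f : ℕ → K := fun j => γ ^ p ^ j / (p : K) ^ j with hf
  have hsplit : ∑ j ∈ Finset.range (m + 1), f j
      = (γ + γ ^ p / (p : K)) + ∑ j ∈ Finset.Ico 2 (m + 1), f j := by
    have h2m : 2 ≤ m + 1 := by omega
    rw [Finset.range_eq_Ico, ← Finset.sum_Ico_consecutive f (Nat.zero_le 2) h2m]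
    congr 1
    have h02 : Finset.Ico 0 2 = Finset.range 2 := by rw [Finset.range_eq_Ico]
    rw [h02, Finset.sum_range_succ, Finset.sum_range_one]
    simp [hf]
  have hT : (b : WithTop ℝ) ≤ ord (∑ j ∈ Finset.Ico 2 (m + 1), f j) := by
    apply hsum
    intro i hi
    exact hterm i (Finset.mem_Ico.mp hi).1
  have hA : (b : WithTop ℝ) ≤ ord (γ + γ ^ p / (p : K)) := by
    have heq : γ + γ ^ p / (p : K)
        = (∑ j ∈ Finset.range (m + 1), f j) + (-(∑ j ∈ Finset.Ico 2 (m + 1), f j)) := by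
      rw [hsplit]; ring
    rw [heq]
    refine le_trans (le_min hS ?_) (hord_add _ _)
    rwa [hord_neg]
  -- factor the low-order part
  have hfact : γ + γ ^ p / (p : K) = (γ / (p : K)) * (γ ^ (p - 1) + (p : K)) := by
    have hpe : γ ^ (p - 1) * γ = γ ^ p := by
      rw [← pow_succ, Nat.sub_add_cancel hp.one_le]
    field_simp
    linear_combination -hpe
  have hγp : ord (γ / (p : K)) = (((q - 1)⁻¹ - 1 : ℝ) : WithTop ℝ) :=
    hdiv γ (p : K) _ _ hpK hγ hord_p
  rw [hfact, hord_mul, hγp] at hA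
  -- conclude
  rcases eq_or_ne (ord (γ ^ (p - 1) + (p : K))) ⊤ with ht | ht
  · rw [ht]; exact WithTop.coe_lt_top _
  · obtain ⟨r, hr⟩ := WithTop.ne_top_iff_exists.mp ht
    rw [← hr, ← WithTop.coe_add, WithTop.coe_le_coe] at hA
    rw [← hr, WithTop.coe_lt_coe]
    have hinv : (0 : ℝ) < (q - 1)⁻¹ := inv_pos.mpr hq1
    rw [hb] at hA
    linarith
end
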